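/- Every continuous piecewise linear function f : ℝ → ℝ is computed by a ReLU network with one hidden layer: there exist n ∈ ℕ and real numbers c, a_1, …, a_n, w_1, …, w_n, b_1, …, b_n such that f(x) = c + Σ_{i=1}^n a_i · ReLU(w_i · x + b_i) for all x ∈ ℝ. Consequently, for every ℓ ≥ 2 the class of functions ℝ → ℝ computed by layered ReLU networks with 1 input and depth ℓ equals PL(1). -/

import Mathlib

/-- A closed convex polyhedron in ℝ: a finite intersection of closed half-spaces. -/
def IsPolyhedron1 (P : Set ℝ) : Prop :=
  ∃ s : Finset (ℝ × ℝ), P = {x : ℝ | ∀ p ∈ s, 0 ≤ p.1 * x + p.2}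

/-- A continuous piecewise linear function ℝ → ℝ (the class PL(1)). -/
def IsPWL1 (f : ℝ → ℝ) : Prop :=
  Continuous f ∧
    ∃ Ps : Finset (Set ℝ),
      (∀ P ∈ Ps, IsPolyhedron1 P) ∧
      (⋃ P ∈ Ps, P) = Set.univ ∧
      ∀ P ∈ Ps, ∃ a b : ℝ, ∀ x ∈ P, f x = a * x + b

/-- `forward n T k x` is σ(T_k(σ(T_{k-1}(⋯σ(T_1 x)⋯)))): the result of applying the
first k affine layers, each followed by the componentwise ReLU. -/
def forward (n : ℕ → ℕ) (T : ∀ i : ℕ, (Fin (n i) → ℝ) →ᵃ[ℝ] (Fin (n (i+1)) → ℝ)) :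
    ∀ k : ℕ, (Fin (n 0) → ℝ) → Fin (n k) → ℝ
  | 0, x => x
  | k+1, x => fun j => max (T k (forward n T k x) j) 0

/-!
A function that is affine on the pieces of a polyhedral cover of `ℝ` can only bend at the finitely
many boundary points `-b / a` of the half-spaces involved. Subtracting `γ * max (x - M) 0` at the
largest bending point `M`, with `γ` the jump of the slope there, removes that bend, so induction on
the set of bending points reduces the function to an affine one, which is
`b + a * max x 0 - a * max (-x) 0`. Conversely, affine maps, sums and `max · 0` preserve piecewise
linearity, so every network computes a function in PL(1); and a one-hidden-layer network is
stretched to depth `k + 2` by identity layers, which a ReLU leaves unchanged.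
-/

open Set

def AffineOn (f : ℝ → ℝ) (J : Set ℝ) : Prop :=
  ∃ a b : ℝ, ∀ x ∈ J, f x = a * x + b

namespace AffineOn

variable {f g : ℝ → ℝ} {J K : Set ℝ} {M : ℝ}

theorem mono (hf : AffineOn f J) (hKJ : K ⊆ J) : AffineOn f K :=
  let ⟨a, b, h⟩ := hf
  ⟨a, b, fun x hx => h x (hKJ hx)⟩

theorem of_subsingleton (hJ : J.Subsingleton) : AffineOn f J := by
  rcases J.eq_empty_or_nonempty with rfl | ⟨z, hz⟩
  · exact ⟨0, 0, by simp⟩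
  · exact ⟨0, f z, fun x hx => by rw [hJ hx hz]; ring⟩

theorem add (hf : AffineOn f J) (hg : AffineOn g J) : AffineOn (fun x => f x + g x) J :=
  let ⟨a, b, hab⟩ := hf
  let ⟨c, d, hcd⟩ := hg
  ⟨a + c, b + d, fun x hx => by simp only [hab x hx, hcd x hx]; ring⟩

theorem const_mul (hf : AffineOn f J) (γ : ℝ) : AffineOn (fun x => γ * f x) J :=
  let ⟨a, b, hab⟩ := hf
  ⟨γ * a, γ * b, fun x hx => by simp only [hab x hx]; ring⟩

theorem exists_sub_relu (hL : AffineOn f (J ∩ Iic M)) (hR : AffineOn f (J ∩ Ici M)) (hM : M ∈ J) :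
    ∃ γ, AffineOn (fun x => f x - γ * max (x - M) 0) J := by
  obtain ⟨a, b, hab⟩ := hL
  obtain ⟨c, d, hcd⟩ := hR
  have hmeet : a * M + b = c * M + d := by
    rw [← hab M ⟨hM, le_refl M⟩, hcd M ⟨hM, le_refl M⟩]
  refine ⟨c - a, a, b, fun x hx => ?_⟩
  rcases le_total x M with hxM | hMx
  · simp only [hab x ⟨hx, hxM⟩, max_eq_right (sub_nonpos.2 hxM)]; ring
  · simp only [hcd x ⟨hx, hMx⟩, max_eq_left (sub_nonneg.2 hMx)]; linear_combination -hmeet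

end AffineOn

theorem affineOn_relu_sub {J : Set ℝ} {M : ℝ} (hJ : ∀ x ∈ J, ∀ y ∈ J, M ∉ Ioo x y) :
    AffineOn (fun x => max (x - M) 0) J := by
  by_cases hy : ∃ y ∈ J, M < y
  · obtain ⟨y, hyJ, hMy⟩ := hy
    refine ⟨1, -M, fun x hx => ?_⟩
    have hMx : M ≤ x := not_lt.1 fun hxM => hJ x hx y hyJ ⟨hxM, hMy⟩
    simp only [max_eq_left (sub_nonneg.2 hMx)]; ring
  · push Not at hy
    exact ⟨0, 0, fun x hx => by simp only [max_eq_right (sub_nonpos.2 (hy x hx))]; ring⟩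

def IsShallowReLU (f : ℝ → ℝ) : Prop :=
  ∃ (n : ℕ) (c : ℝ) (a w b : Fin n → ℝ), ∀ x : ℝ, f x = c + ∑ i, a i * max (w i * x + b i) 0

theorem isShallowReLU_const (c : ℝ) : IsShallowReLU fun _ => c :=
  ⟨0, c, Fin.elim0, Fin.elim0, Fin.elim0, by simp⟩

theorem IsShallowReLU.add_relu {g : ℝ → ℝ} (hg : IsShallowReLU g) (γ v β : ℝ) :
    IsShallowReLU fun x => g x + γ * max (v * x + β) 0 := by
  obtain ⟨n, c, a, w, b, h⟩ := hg
  refine ⟨n + 1, c, Fin.snoc a γ, Fin.snoc w v, Fin.snoc b β, fun x => ?_⟩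
  simp only [Fin.sum_univ_castSucc, Fin.snoc_castSucc, Fin.snoc_last, h]
  ring

theorem isShallowReLU_affine (a b : ℝ) : IsShallowReLU fun x => a * x + b := by
  convert ((isShallowReLU_const b).add_relu a 1 0).add_relu (-a) (-1) 0 using 2 with x
  simp only [one_mul, neg_one_mul, add_zero]
  linear_combination (-a) * max_zero_sub_max_neg_zero_eq_self x

def HasKinksIn (f : ℝ → ℝ) (S : Finset ℝ) : Prop :=
  ∀ J : Set ℝ, (∀ x ∈ J, ∀ y ∈ J, ∀ t ∈ S, t ∉ Ioo x y) → AffineOn f J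

theorem HasKinksIn.affineOn_univ {f : ℝ → ℝ} (hf : HasKinksIn f ∅) : AffineOn f univ :=
  hf univ fun _ _ _ _ t ht => absurd ht (Finset.notMem_empty t)

theorem HasKinksIn.exists_sub_relu {f : ℝ → ℝ} {M : ℝ} {S : Finset ℝ} (hS : ∀ t ∈ S, t < M)
    (hf : HasKinksIn f (insert M S)) :
    ∃ γ, HasKinksIn (fun x => f x - γ * max (x - M) 0) S := by
  set R := {x : ℝ | ∀ t ∈ S, t ≤ x}
  have hleft : AffineOn f (R ∩ Iic M) := hf _ fun x hx y hy t ht hxy => by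
    rcases Finset.mem_insert.1 ht with rfl | ht
    · exact hxy.2.not_ge hy.2
    · exact hxy.1.not_ge (hx.1 t ht)
  have hright : AffineOn f (R ∩ Ici M) := hf _ fun x hx y hy t ht hxy => by
    rcases Finset.mem_insert.1 ht with rfl | ht
    · exact hxy.1.not_ge hx.2
    · exact (hS t ht).not_ge (hx.2.trans hxy.1.le)
  obtain ⟨γ, hγ⟩ := hleft.exists_sub_relu hright fun t ht => (hS t ht).le
  refine ⟨γ, fun J hJ => ?_⟩
  by_cases hsep : ∃ x ∈ J, ∃ y ∈ J, M ∈ Ioo x y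
  · obtain ⟨-, -, y, hy, -, hMy⟩ := hsep
    exact hγ.mono fun z hz t ht => not_lt.1 fun hzt => hJ z hz y hy t ht ⟨hzt, (hS t ht).trans hMy⟩
  · push Not at hsep
    have hfJ : AffineOn f J := hf J fun x hx y hy t ht => by
      rcases Finset.mem_insert.1 ht with rfl | ht
      exacts [hsep x hx y hy, hJ x hx y hy t ht]
    simpa only [sub_eq_add_neg, neg_mul_eq_neg_mul] using
      hfJ.add ((affineOn_relu_sub hsep).const_mul (-γ))

theorem HasKinksIn.isShallowReLU {f : ℝ → ℝ} {S : Finset ℝ} (hf : HasKinksIn f S) :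
    IsShallowReLU f := by
  classical
  induction S using Finset.induction_on_max generalizing f with
  | empty =>
    obtain ⟨a, b, hab⟩ := hf.affineOn_univ
    convert isShallowReLU_affine a b using 1
    exact funext fun x => hab x trivial
  | insert M S hS ih =>
    obtain ⟨γ, hγ⟩ := hf.exists_sub_relu hS
    convert (ih hγ).add_relu γ 1 (-M) using 2 with x
    rw [one_mul, ← sub_eq_add_neg, sub_add_cancel]

theorem neg_div_between_of_sign_change {a b x y : ℝ} (hx : 0 ≤ a * x + b) (hy : a * y + b < 0) :
    (x ≤ -b / a ∧ -b / a < y) ∨ (y < -b / a ∧ -b / a ≤ x) := by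
  have ha : a ≠ 0 := by rintro rfl; linarith
  have hroot : a * (-b / a) = -b := mul_div_cancel₀ _ ha
  rcases ha.lt_or_gt with ha | ha
  · left; constructor <;> nlinarith
  · right; constructor <;> nlinarith

def IsPolyhedralCover (Ps : Finset (Set ℝ)) : Prop :=
  (∀ P ∈ Ps, IsPolyhedron1 P) ∧ ⋃ P ∈ Ps, P = univ

theorem isPWL1_iff {f : ℝ → ℝ} :
    IsPWL1 f ↔ Continuous f ∧ ∃ Ps, IsPolyhedralCover Ps ∧ ∀ P ∈ Ps, AffineOn f P := by
  simp only [IsPWL1, IsPolyhedralCover, AffineOn, and_assoc]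

/-- The kinks lie among the boundary points `-b / a` of the half-spaces `0 ≤ a * x + b` cutting
out the pieces (for `a = 0` this is the junk value `0`, a harmless extra point). -/
theorem IsPolyhedralCover.exists_hasKinksIn {f : ℝ → ℝ} {Ps : Finset (Set ℝ)}
    (hPs : IsPolyhedralCover Ps) (hf : ∀ P ∈ Ps, AffineOn f P) : ∃ S, HasKinksIn f S := by
  classical
  obtain ⟨hpoly, hcov⟩ := hPs
  choose! s hs using hpoly
  refine ⟨Ps.biUnion fun P => (s P).image fun p => -p.2 / p.1, fun J hJ => ?_⟩
  rcases J.subsingleton_or_nontrivial with hsub | hnt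
  · exact .of_subsingleton hsub
  obtain ⟨x, hx, y, hy, hxy⟩ := nontrivial_iff_exists_lt.1 hnt
  obtain ⟨P, hP, hmid⟩ : ∃ P ∈ Ps, (x + y) / 2 ∈ P := by
    simpa using hcov.symm.subset (mem_univ ((x + y) / 2))
  refine (hf P hP).mono fun z hz => ?_
  rw [hs P hP] at hmid ⊢
  intro p hp
  by_contra hneg
  have hroot : -p.2 / p.1 ∈ Ps.biUnion fun P => (s P).image fun p => -p.2 / p.1 :=
    Finset.mem_biUnion.2 ⟨P, hP, Finset.mem_image_of_mem _ hp⟩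
  rcases neg_div_between_of_sign_change (hmid p hp) (not_le.1 hneg) with ⟨h1, h2⟩ | ⟨h1, h2⟩
  · exact hJ x hx z hz _ hroot ⟨by linarith, h2⟩
  · exact hJ z hz y hy _ hroot ⟨h1, by linarith⟩

theorem IsPWL1.isShallowReLU {f : ℝ → ℝ} (hf : IsPWL1 f) : IsShallowReLU f := by
  obtain ⟨-, Ps, hPs, hfP⟩ := isPWL1_iff.1 hf
  obtain ⟨S, hS⟩ := hPs.exists_hasKinksIn hfP
  exact hS.isShallowReLU

theorem isPolyhedron1_halfspace (a b : ℝ) : IsPolyhedron1 {x | 0 ≤ a * x + b} :=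
  ⟨{(a, b)}, by simp⟩

theorem IsPolyhedron1.inter {P Q : Set ℝ} (hP : IsPolyhedron1 P) (hQ : IsPolyhedron1 Q) :
    IsPolyhedron1 (P ∩ Q) := by
  classical
  obtain ⟨s, rfl⟩ := hP
  obtain ⟨t, rfl⟩ := hQ
  exact ⟨s ∪ t, by ext x; simp [or_imp, forall_and]⟩

theorem isPolyhedralCover_univ : IsPolyhedralCover {univ} :=
  ⟨by simpa using ⟨∅, by simp⟩, by simp⟩

theorem isPolyhedralCover_halfspaces (a b : ℝ) :
    IsPolyhedralCover {{x | 0 ≤ a * x + b}, {x | 0 ≤ -a * x + -b}} := by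
  refine ⟨fun P hP => ?_, eq_univ_of_forall fun x => ?_⟩
  · rcases Finset.mem_insert.1 hP with rfl | hP
    · exact isPolyhedron1_halfspace a b
    · rw [Finset.mem_singleton.1 hP]; exact isPolyhedron1_halfspace (-a) (-b)
  simp only [Finset.mem_insert, Finset.mem_singleton, mem_iUnion, exists_prop,
    exists_eq_or_imp, exists_eq_left, mem_ofPred_eq]
  by_contra! h
  linarith [h.1, h.2]

theorem IsPolyhedralCover.biUnion_inter {Ps : Finset (Set ℝ)} {Qs : Set ℝ → Finset (Set ℝ)}
    (hPs : IsPolyhedralCover Ps) (hQs : ∀ P ∈ Ps, IsPolyhedralCover (Qs P)) :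
    IsPolyhedralCover (Ps.biUnion fun P => (Qs P).image (P ∩ ·)) := by
  classical
  refine ⟨?_, eq_univ_of_forall fun x => ?_⟩
  · simp only [Finset.mem_biUnion, Finset.mem_image]
    rintro _ ⟨P, hP, Q, hQ, rfl⟩
    exact (hPs.1 P hP).inter ((hQs P hP).1 Q hQ)
  · obtain ⟨P, hP, hxP⟩ : ∃ P ∈ Ps, x ∈ P := by simpa using hPs.2.symm.subset (mem_univ x)
    obtain ⟨Q, hQ, hxQ⟩ : ∃ Q ∈ Qs P, x ∈ Q := by
      simpa using (hQs P hP).2.symm.subset (mem_univ x)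
    simp only [mem_iUnion, Finset.mem_biUnion, Finset.mem_image]
    exact ⟨P ∩ Q, ⟨P, hP, Q, hQ, rfl⟩, hxP, hxQ⟩

theorem IsPolyhedralCover.exists_refinement_affineOn {f : ℝ → ℝ} {Ps : Finset (Set ℝ)}
    (hPs : IsPolyhedralCover Ps)
    (h : ∀ P ∈ Ps, ∃ Qs, IsPolyhedralCover Qs ∧ ∀ Q ∈ Qs, AffineOn f (P ∩ Q)) :
    ∃ Rs, IsPolyhedralCover Rs ∧ ∀ R ∈ Rs, AffineOn f R := by
  classical
  choose! Qs hQs hf using h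
  refine ⟨_, hPs.biUnion_inter hQs, ?_⟩
  simp only [Finset.mem_biUnion, Finset.mem_image]
  rintro _ ⟨P, hP, Q, hQ, rfl⟩
  exact hf P hP Q hQ

namespace IsPWL1

variable {f g : ℝ → ℝ}

theorem affine (a b : ℝ) : IsPWL1 fun x => a * x + b :=
  isPWL1_iff.2 ⟨by fun_prop, {univ}, isPolyhedralCover_univ, fun _ _ => ⟨a, b, fun _ _ => rfl⟩⟩

theorem add (hf : IsPWL1 f) (hg : IsPWL1 g) : IsPWL1 fun x => f x + g x := by
  obtain ⟨hfc, Ps, hPs, hfP⟩ := isPWL1_iff.1 hf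
  obtain ⟨hgc, Qs, hQs, hgQ⟩ := isPWL1_iff.1 hg
  refine isPWL1_iff.2 ⟨hfc.add hgc, hPs.exists_refinement_affineOn fun P hP => ⟨Qs, hQs, ?_⟩⟩
  exact fun Q hQ => ((hfP P hP).mono inter_subset_left).add ((hgQ Q hQ).mono inter_subset_right)

theorem const_mul (hf : IsPWL1 f) (γ : ℝ) : IsPWL1 fun x => γ * f x := by
  obtain ⟨hfc, Ps, hPs, hfP⟩ := isPWL1_iff.1 hf
  exact isPWL1_iff.2 ⟨continuous_const.mul hfc, Ps, hPs, fun P hP => (hfP P hP).const_mul γ⟩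

theorem relu (hf : IsPWL1 f) : IsPWL1 fun x => max (f x) 0 := by
  obtain ⟨hfc, Ps, hPs, hfP⟩ := isPWL1_iff.1 hf
  refine isPWL1_iff.2 ⟨hfc.max continuous_const, hPs.exists_refinement_affineOn fun P hP => ?_⟩
  obtain ⟨a, b, hab⟩ := hfP P hP
  refine ⟨_, isPolyhedralCover_halfspaces a b, ?_⟩
  simp only [Finset.mem_insert, Finset.mem_singleton]
  rintro Q (rfl | rfl)
  · exact ⟨a, b, fun x hx => by simp only [hab x hx.1]; exact max_eq_left hx.2⟩
  · refine ⟨0, 0, fun x hx => ?_⟩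
    have hneg : a * x + b ≤ 0 := by linarith [hx.2.out]
    simp only [hab x hx.1, max_eq_right hneg]; ring

theorem sum {ι : Type*} (s : Finset ι) {F : ι → ℝ → ℝ} (hF : ∀ i ∈ s, IsPWL1 (F i)) :
    IsPWL1 fun x => ∑ i ∈ s, F i x := by
  classical
  induction s using Finset.induction_on with
  | empty => simpa using affine 0 0
  | insert i s hi ih =>
    simp only [Finset.sum_insert hi]
    exact (hF i (s.mem_insert_self i)).add (ih fun j hj => hF j (Finset.mem_insert_of_mem hj))

theorem affineMap_apply {m l : ℕ} (T : (Fin m → ℝ) →ᵃ[ℝ] (Fin l → ℝ)) {v : ℝ → Fin m → ℝ}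
    (hv : ∀ i, IsPWL1 fun x => v x i) (j : Fin l) : IsPWL1 fun x => T (v x) j := by
  classical
  have hT : ∀ u, T u j = ∑ i, T.linear (fun i' => if i = i' then 1 else 0) j * u i + T 0 j := by
    intro u
    rw [T.decomp, Pi.add_apply, T.linear.pi_apply_eq_sum_univ u]
    simp [Finset.sum_apply, mul_comm]
  rw [show (fun x => T (v x) j) = _ from funext fun x => hT (v x)]
  exact (sum _ fun i _ => (hv i).const_mul _).add (by simpa using affine 0 (T 0 j))

end IsPWL1

theorem isPWL1_forward (n : ℕ → ℕ) (T : ∀ i : ℕ, (Fin (n i) → ℝ) →ᵃ[ℝ] (Fin (n (i+1)) → ℝ))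
    (k : ℕ) (i : Fin (n k)) : IsPWL1 fun x => forward n T k (fun _ => x) i := by
  induction k with
  | zero => simpa [forward] using IsPWL1.affine 1 0
  | succ k ih => exact (IsPWL1.affineMap_apply (T k) ih i).relu

/-- Coefficients are indexed by `ℕ` so that a network can be specified independently of the
widths of its layers. -/
noncomputable def natLayer (p q : ℕ) (E : ℕ → ℕ → ℝ) (C : ℕ → ℝ) :
    (Fin p → ℝ) →ᵃ[ℝ] (Fin q → ℝ) :=
  (Matrix.of fun (j : Fin q) (l : Fin p) => E j l).mulVecLin.toAffineMap +
    AffineMap.const ℝ (Fin p → ℝ) fun j : Fin q => C j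

theorem natLayer_apply (p q : ℕ) (E : ℕ → ℕ → ℝ) (C : ℕ → ℝ) (v : Fin p → ℝ) (j : Fin q) :
    natLayer p q E C v j = ∑ l : Fin p, E j l * v l + C j := by
  simp [natLayer, Matrix.mulVec, dotProduct]

section ShallowNetwork

variable (k n : ℕ) (w b a : ℕ → ℝ) (c : ℝ)

def shallowWidth (i : ℕ) : ℕ := if i = 0 ∨ k + 1 < i then 1 else n

/-- Layers `1, …, k` are the identity, which commutes with the ReLU on nonnegative inputs. -/
noncomputable def shallowLayer (i : ℕ) :
    (Fin (shallowWidth k n i) → ℝ) →ᵃ[ℝ] (Fin (shallowWidth k n (i + 1)) → ℝ) :=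
  if i = 0 then natLayer _ _ (fun j _ => w j) b
  else if i ≤ k then natLayer _ _ (fun j l => if j = l then 1 else 0) 0
  else natLayer _ _ (fun _ l => a l) fun _ => c

theorem shallowWidth_hidden {i : ℕ} (hi₀ : 1 ≤ i) (hik : i ≤ k + 1) : shallowWidth k n i = n := by
  simp only [shallowWidth]; split_ifs <;> omega

theorem forward_shallowLayer (x : ℝ) {i : ℕ} (hi₀ : 1 ≤ i) (hik : i ≤ k + 1)
    (j : Fin (shallowWidth k n i)) :
    forward (shallowWidth k n) (shallowLayer k n w b a c) i (fun _ => x) j =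
      max (w j * x + b j) 0 := by
  induction i with
  | zero => omega
  | succ i ih =>
    dsimp only [forward]
    rcases Nat.eq_zero_or_pos i with rfl | hi
    · rw [shallowLayer, if_pos rfl, natLayer_apply]
      simp only [forward, Finset.sum_const, Finset.card_univ, Fintype.card_fin]
      simp [shallowWidth]
    · have hj : (j : ℕ) < shallowWidth k n i := by
        simpa [shallowWidth_hidden k n hi (by omega), shallowWidth_hidden k n hi₀ hik] using j.isLt
      rw [shallowLayer, if_neg hi.ne', if_pos (by omega), natLayer_apply,
        Finset.sum_eq_single ⟨j, hj⟩ (fun l _ hl => by rw [if_neg fun h => hl (Fin.ext h.symm),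
          zero_mul]) (by simp), ih hi (by omega)]
      simp

theorem shallowLayer_output (x : ℝ) (hout : shallowWidth k n (k + 2) = 1) :
    shallowLayer k n w b a c (k + 1)
        (forward (shallowWidth k n) (shallowLayer k n w b a c) (k + 1) (fun _ => x))
        (Fin.cast hout.symm 0) =
      c + ∑ l ∈ Finset.range n, a l * max (w l * x + b l) 0 := by
  rw [shallowLayer, if_neg (by omega), if_neg (by omega), natLayer_apply, add_comm]
  congr 1
  calc _ = ∑ l : Fin (shallowWidth k n (k + 1)), a l * max (w l * x + b l) 0 :=
        Finset.sum_congr rfl fun l _ => by rw [forward_shallowLayer k n w b a c x (by omega) le_rfl]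
    _ = _ := by
      rw [Fin.sum_univ_eq_sum_range (fun l => a l * max (w l * x + b l) 0),
        shallowWidth_hidden k n (by omega) le_rfl]

end ShallowNetwork

theorem IsShallowReLU.exists_network {f : ℝ → ℝ} (hf : IsShallowReLU f) (k : ℕ) :
    ∃ (N : ℕ → ℕ) (_ : N 0 = 1) (hout : N (k + 2) = 1)
      (T : ∀ i : ℕ, (Fin (N i) → ℝ) →ᵃ[ℝ] (Fin (N (i + 1)) → ℝ)),
      ∀ x : ℝ, f x = T (k + 1) (forward N T (k + 1) (fun _ => x)) (Fin.cast hout.symm 0) := by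
  obtain ⟨n, c, a, w, b, hrep⟩ := hf
  have hout : shallowWidth k n (k + 2) = 1 := by simp [shallowWidth]
  refine ⟨shallowWidth k n, by simp [shallowWidth], hout,
    shallowLayer k n (Function.extend Fin.val w 0) (Function.extend Fin.val b 0)
      (Function.extend Fin.val a 0) c, fun x => ?_⟩
  rw [shallowLayer_output k n _ _ _ c x hout, hrep, ← Fin.sum_univ_eq_sum_range]
  simp only [Fin.val_injective.extend_apply]

/-- Every continuous piecewise linear f : ℝ → ℝ is computed by a one-hidden-layer
ReLU network, and consequently, for every depth ℓ ≥ 2 (here ℓ = k + 2), the class of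
functions ℝ → ℝ computed by layered ReLU networks with 1 input and depth ℓ is
exactly PL(1). -/
theorem pwl1_eq_relu_networks :
    (∀ f : ℝ → ℝ, IsPWL1 f → ∃ (n : ℕ) (c : ℝ) (a w b : Fin n → ℝ),
      ∀ x : ℝ, f x = c + ∑ i, a i * max (w i * x + b i) 0) ∧
    (∀ k : ℕ,
      {f : ℝ → ℝ | ∃ (n : ℕ → ℕ) (h0 : n 0 = 1) (hout : n (k+2) = 1)
          (T : ∀ i : ℕ, (Fin (n i) → ℝ) →ᵃ[ℝ] (Fin (n (i+1)) → ℝ)),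
          ∀ x : ℝ, f x = T (k+1) (forward n T (k+1) (fun _ => x)) (Fin.cast hout.symm 0)}
        = {f : ℝ → ℝ | IsPWL1 f}) := by
  refine ⟨fun f hf => hf.isShallowReLU, fun k => Set.ext fun f =>
    ⟨?_, fun hf => hf.isShallowReLU.exists_network k⟩⟩
  rintro ⟨n, -, hout, T, hf⟩
  show IsPWL1 f
  simpa only [← hf] using
    IsPWL1.affineMap_apply (T (k + 1)) (isPWL1_forward n T (k + 1)) (Fin.cast hout.symm 0)
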